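/- arXiv:2309.05288 — 4 statements merged into one kernel-verified Lean document; each statement's English description precedes it below -/
import Mathlib

section
/- Let F be a finite field of characteristic p, let C be a linear code of length n over F, and let σ be a permutation automorphism of C. Then the subcodes E_σ(C) and F_σ(C) are orthogonal to each other with respect to the Euclidean inner product: for every v ∈ E_σ(C) and every w ∈ F_σ(C), one has v·w = Σ_{i=1}^n v_i w_i = 0. -/
/-! A vector fixed by `σ` is constant on every cycle of `σ`, so the contribution of a cycle to
`v · w` is that constant times the cycle sum of `v`, which vanishes for `v ∈ E_σ(C)`. -/

open Finset

/-- The action of a permutation `σ` on vectors by permuting coordinates: `(vσ) i = v (σ i)`. -/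
def permAct {F : Type*} {n : ℕ} (σ : Equiv.Perm (Fin n)) (v : Fin n → F) : Fin n → F :=
  fun i => v (σ i)

open Classical in
/-- The cycle (orbit) of `σ` containing the coordinate `i`, as a `Finset`
(fixed points are counted as cycles of length 1). -/
noncomputable def orbitOf {n : ℕ} (σ : Equiv.Perm (Fin n)) (i : Fin n) : Finset (Fin n) :=
  Finset.univ.filter (fun j => σ.SameCycle i j)

/-- The Euclidean inner product `u·v = ∑ i, u i * v i`. -/
def eInner {F : Type*} [Field F] {ι : Type*} [Fintype ι] (u v : ι → F) : F :=
  ∑ i, u i * v i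

/-- The Euclidean dual of a set of vectors. -/
def dualSet {F : Type*} [Field F] {ι : Type*} [Fintype ι] (S : Set (ι → F)) : Set (ι → F) :=
  {u | ∀ v ∈ S, eInner u v = 0}

/-- A set of vectors is self-orthogonal if it is contained in its dual. -/
def IsSelfOrthogonalSet {F : Type*} [Field F] {ι : Type*} [Fintype ι] (S : Set (ι → F)) : Prop :=
  S ⊆ dualSet S

/-- A set of vectors is self-dual if it equals its dual. -/
def IsSelfDualSet {F : Type*} [Field F] {ι : Type*} [Fintype ι] (S : Set (ι → F)) : Prop :=
  S = dualSet S

/-- A set of vectors is LCD (linear complementary dual) if it meets its dual only in `0`. -/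
def IsLCDSet {F : Type*} [Field F] {ι : Type*} [Fintype ι] (S : Set (ι → F)) : Prop :=
  S ∩ dualSet S = {0}

/-- The fixed subcode `F_σ(C) = {v ∈ C : vσ = v}`. -/
def fixedCode {F : Type*} [Field F] {n : ℕ} (σ : Equiv.Perm (Fin n))
    (C : Submodule F (Fin n → F)) : Set (Fin n → F) :=
  {v | v ∈ C ∧ permAct σ v = v}

/-- The subcode `E_σ(C) = {v ∈ C : the sum of the coordinates of v over each cycle of σ is 0}`. -/
def evenCode {F : Type*} [Field F] {n : ℕ} (σ : Equiv.Perm (Fin n))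
    (C : Submodule F (Fin n → F)) : Set (Fin n → F) :=
  {v | v ∈ C ∧ ∀ i : Fin n, ∑ j ∈ orbitOf σ i, v j = 0}

theorem Equiv.Perm.SameCycle.apply_eq_of_comp_eq {α β : Type*} [Finite α] {σ : Equiv.Perm α}
    {w : α → β} (hw : w ∘ σ = w) {x y : α} (hxy : σ.SameCycle x y) : w y = w x := by
  obtain ⟨k, -, rfl⟩ := hxy.exists_pow_eq'
  have hsemi : Function.Semiconj w σ id := fun z => congrFun hw z
  simpa only [Equiv.Perm.coe_pow, Function.iterate_id, id_eq] using hsemi.iterate_right k x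

theorem mem_orbitOf {n : ℕ} {σ : Equiv.Perm (Fin n)} {i j : Fin n} :
    j ∈ orbitOf σ i ↔ σ.SameCycle i j := by
  simp [orbitOf]

theorem sum_eq_zero_of_sum_orbitOf_eq_zero {M : Type*} [AddCommMonoid M] {n : ℕ}
    (σ : Equiv.Perm (Fin n)) {f : Fin n → M} (hf : ∀ i, ∑ j ∈ orbitOf σ i, f j = 0) :
    ∑ i, f i = 0 := by
  classical
  refine sum_cancels_of_partition_cancels ⟨σ.SameCycle, Equiv.Perm.SameCycle.equivalence σ⟩
    fun i _ => ?_
  convert hf i using 2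
  ext j
  simp [mem_orbitOf, Equiv.Perm.sameCycle_comm]

theorem sum_orbitOf_mul_eq_zero {F : Type*} [NonUnitalNonAssocSemiring F] {n : ℕ}
    {σ : Equiv.Perm (Fin n)} {v w : Fin n → F} (hw : permAct σ w = w) (i : Fin n)
    (hv : ∑ j ∈ orbitOf σ i, v j = 0) :
    ∑ j ∈ orbitOf σ i, v j * w j = 0 := by
  calc ∑ j ∈ orbitOf σ i, v j * w j
      = ∑ j ∈ orbitOf σ i, v j * w i := sum_congr rfl fun j hj => by
        rw [(mem_orbitOf.mp hj).apply_eq_of_comp_eq hw]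
    _ = 0 := by rw [← sum_mul, hv, zero_mul]

theorem even_fixed_euclidean_orthogonal_general {F : Type*} [Field F]
    {n : ℕ} (σ : Equiv.Perm (Fin n))
    (C : Submodule F (Fin n → F)) :
    ∀ v ∈ evenCode σ C, ∀ w ∈ fixedCode σ C, eInner v w = 0 := by
  rintro v ⟨-, hv⟩ w ⟨-, hw⟩
  exact sum_eq_zero_of_sum_orbitOf_eq_zero σ fun i => sum_orbitOf_mul_eq_zero hw i (hv i)

/-- For a linear code `C` over a finite field of characteristic `p` with a
permutation automorphism `σ`, the subcodes `E_σ(C)` and `F_σ(C)` are orthogonal to each other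
with respect to the Euclidean inner product. -/
theorem even_fixed_euclidean_orthogonal {F : Type*} [Field F] [Fintype F] (p : ℕ) [CharP F p]
    {n : ℕ} (σ : Equiv.Perm (Fin n))
    (C : Submodule F (Fin n → F)) (hC : ∀ v, v ∈ C ↔ permAct σ v ∈ C) :
    ∀ v ∈ evenCode σ C, ∀ w ∈ fixedCode σ C, eInner v w = 0 :=
  even_fixed_euclidean_orthogonal_general σ C
end

section
/- Let F be a finite field of characteristic p with p not dividing m, and let C be a linear code of length n = cm + f over F with a permutation automorphism σ of type m-(c,f) (c disjoint m-cycles and f fixed points). Then C is Euclidean self-orthogonal if and only if both F_σ(C) and E_σ(C) are Euclidean self-orthogonal. -/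
open Finset

/-- The permutation action of a permutation of type `m-(c,f)` (c disjoint `m`-cycles and `f`
fixed points) on `F^{cm+f}`, where coordinates are indexed by `(Fin c × ZMod m) ⊕ Fin f`. -/
def aqcShift {F : Type*} {c m f : ℕ} (v : (Fin c × ZMod m) ⊕ Fin f → F) :
    (Fin c × ZMod m) ⊕ Fin f → F :=
  fun x => match x with
  | .inl ij => v (.inl (ij.1, ij.2 + 1))
  | .inr j => v (.inr j)

/-- The projection `π : F^{cm+f} → F^{c+f}`; on a `σ`-fixed vector it returns the common value
on each cycle (fixed points counted as cycles of length 1). -/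
def aqcPi {F : Type*} {c m f : ℕ} (v : (Fin c × ZMod m) ⊕ Fin f → F) :
    Fin c ⊕ Fin f → F :=
  fun x => match x with
  | .inl i => v (.inl (i, 0))
  | .inr j => v (.inr j)

/-- The fixed subcode `F_σ(C)` for a permutation of type `m-(c,f)`. -/
def aqcFixedCode {F : Type*} [Field F] {c m f : ℕ}
    (C : Submodule F ((Fin c × ZMod m) ⊕ Fin f → F)) : Set ((Fin c × ZMod m) ⊕ Fin f → F) :=
  {v | v ∈ C ∧ aqcShift v = v}

/-- The subcode `E_σ(C)` for a permutation of type `m-(c,f)`: codewords whose coordinate sum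
over every cycle (including the singleton cycles at the fixed points) vanishes. -/
def aqcEvenCode {F : Type*} [Field F] {c m f : ℕ} [NeZero m]
    (C : Submodule F ((Fin c × ZMod m) ⊕ Fin f → F)) : Set ((Fin c × ZMod m) ⊕ Fin f → F) :=
  {v | v ∈ C ∧ (∀ i : Fin c, ∑ j : ZMod m, v (.inl (i, j)) = 0) ∧ (∀ j : Fin f, v (.inr j) = 0)}


/-!
Averaging over the cyclic group generated by `σ` (possible since `m` is invertible in `F`) splits
every codeword `v` of `C` as `v = v̄ + (v - v̄)` with `v̄ ∈ F_σ(C)` and `v - v̄ ∈ E_σ(C)`.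
A `σ`-fixed vector is constant on every cycle, so it is orthogonal to every vector whose cycle
sums vanish; hence the inner product of two codewords is the sum of the inner products of their
fixed parts and of their `E_σ` parts.
-/

lemma IsSelfOrthogonalSet.mono {F ι : Type*} [Field F] [Fintype ι] {S T : Set (ι → F)}
    (hT : IsSelfOrthogonalSet T) (hST : S ⊆ T) : IsSelfOrthogonalSet S :=
  fun _ hu v hv => hT (hST hu) v (hST hv)

lemma isSelfOrthogonalSet_of_forall_eq_add {F ι : Type*} [Field F] [Fintype ι]
    {S A B : Set (ι → F)} (hA : IsSelfOrthogonalSet A) (hB : IsSelfOrthogonalSet B)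
    (hAB : ∀ a ∈ A, ∀ b ∈ B, eInner a b = 0) (hS : ∀ s ∈ S, ∃ a ∈ A, ∃ b ∈ B, s = a + b) :
    IsSelfOrthogonalSet S := by
  rintro _ hu _ hv
  obtain ⟨a, ha, b, hb, rfl⟩ := hS _ hu
  obtain ⟨a', ha', b', hb', rfl⟩ := hS _ hv
  have haa' : a ⬝ᵥ a' = 0 := hA ha a' ha'
  have hab' : a ⬝ᵥ b' = 0 := hAB a ha b' hb'
  have hba' : b ⬝ᵥ a' = 0 := by rw [dotProduct_comm]; exact hAB a' ha' b hb
  have hbb' : b ⬝ᵥ b' = 0 := hB hb b' hb'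
  change (a + b) ⬝ᵥ (a' + b') = 0
  simp [add_dotProduct, dotProduct_add, haa', hab', hba', hbb']

section Rotation

variable {F : Type*} {c m f : ℕ}

/-- `aqcRotate k` is the action of `σ ^ k`. -/
def aqcRotate (k : ZMod m) (v : (Fin c × ZMod m) ⊕ Fin f → F) :
    (Fin c × ZMod m) ⊕ Fin f → F :=
  fun x => match x with
  | .inl ij => v (.inl (ij.1, ij.2 + k))
  | .inr j => v (.inr j)

lemma aqcShift_aqcRotate (k : ZMod m) (v : (Fin c × ZMod m) ⊕ Fin f → F) :
    aqcShift (aqcRotate k v) = aqcRotate (k + 1) v := by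
  funext x
  cases x with
  | inl ij => simp only [aqcShift, aqcRotate, add_comm (1 : ZMod m), add_assoc]
  | inr j => rfl

lemma aqcRotate_mem [NeZero m] {S : Set ((Fin c × ZMod m) ⊕ Fin f → F)}
    (hS : ∀ v ∈ S, aqcShift v ∈ S) {v} (hv : v ∈ S) (k : ZMod m) : aqcRotate k v ∈ S := by
  have hiter : ∀ n : ℕ, aqcRotate (n : ZMod m) v ∈ S := by
    intro n
    induction n with
    | zero =>
      convert hv
      funext x
      cases x <;> simp [aqcRotate]
    | succ n ih => simpa [aqcShift_aqcRotate] using hS _ ih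
  simpa using hiter k.val

lemma apply_inl_eq_of_aqcShift_eq [NeZero m] {u : (Fin c × ZMod m) ⊕ Fin f → F}
    (hu : aqcShift u = u) (i : Fin c) (j : ZMod m) : u (.inl (i, j)) = u (.inl (i, 0)) := by
  have hrot : aqcRotate j u = u :=
    aqcRotate_mem (S := {u}) (fun v hv => by rw [hv, hu]; rfl) rfl j
  simpa [aqcRotate] using congrFun hrot (.inl (i, 0))

end Rotation

section Average

variable {F : Type*} [Field F] {c m f : ℕ} [NeZero m]

def aqcAverage (v : (Fin c × ZMod m) ⊕ Fin f → F) : (Fin c × ZMod m) ⊕ Fin f → F :=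
  (m : F)⁻¹ • ∑ k : ZMod m, aqcRotate k v

lemma aqcAverage_apply_inl (v : (Fin c × ZMod m) ⊕ Fin f → F) (i : Fin c) (j : ZMod m) :
    aqcAverage v (.inl (i, j)) = (m : F)⁻¹ * ∑ k : ZMod m, v (.inl (i, k)) := by
  simp only [aqcAverage, Pi.smul_apply, Finset.sum_apply, aqcRotate, smul_eq_mul]
  congr 1
  exact Fintype.sum_equiv (Equiv.addLeft j) _ _ fun _ => rfl

lemma aqcAverage_apply_inr (hm : (m : F) ≠ 0) (v : (Fin c × ZMod m) ⊕ Fin f → F) (j : Fin f) :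
    aqcAverage v (.inr j) = v (.inr j) := by
  simp only [aqcAverage, Pi.smul_apply, Finset.sum_apply, aqcRotate, smul_eq_mul,
    Finset.sum_const, Finset.card_univ, ZMod.card, nsmul_eq_mul, inv_mul_cancel_left₀ hm]

lemma aqcShift_aqcAverage (v : (Fin c × ZMod m) ⊕ Fin f → F) :
    aqcShift (aqcAverage v) = aqcAverage v := by
  funext x
  cases x with
  | inl ij => rw [aqcShift, aqcAverage_apply_inl, aqcAverage_apply_inl]
  | inr j => rfl

lemma sum_sub_aqcAverage_apply_inl (hm : (m : F) ≠ 0) (v : (Fin c × ZMod m) ⊕ Fin f → F)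
    (i : Fin c) : ∑ j : ZMod m, (v - aqcAverage v) (.inl (i, j)) = 0 := by
  simp only [Pi.sub_apply, Finset.sum_sub_distrib, aqcAverage_apply_inl, Finset.sum_const,
    Finset.card_univ, ZMod.card, nsmul_eq_mul, mul_inv_cancel_left₀ hm, sub_self]

variable {C : Submodule F ((Fin c × ZMod m) ⊕ Fin f → F)}

lemma aqcAverage_mem_aqcFixedCode (hC : ∀ v ∈ C, aqcShift v ∈ C) {v} (hv : v ∈ C) :
    aqcAverage v ∈ aqcFixedCode C :=
  ⟨C.smul_mem _ (C.sum_mem fun k _ => aqcRotate_mem hC hv k), aqcShift_aqcAverage v⟩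

lemma sub_aqcAverage_mem_aqcEvenCode (hm : (m : F) ≠ 0) (hC : ∀ v ∈ C, aqcShift v ∈ C) {v}
    (hv : v ∈ C) : v - aqcAverage v ∈ aqcEvenCode C :=
  ⟨C.sub_mem hv (aqcAverage_mem_aqcFixedCode hC hv).1, sum_sub_aqcAverage_apply_inl hm v,
    fun j => by simp [aqcAverage_apply_inr hm]⟩

end Average

lemma eInner_eq_zero_of_aqcShift_eq {F : Type*} [Field F] {c m f : ℕ} [NeZero m]
    {u w : (Fin c × ZMod m) ⊕ Fin f → F} (hu : aqcShift u = u)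
    (hw_cycle : ∀ i : Fin c, ∑ j : ZMod m, w (.inl (i, j)) = 0)
    (hw_fixed : ∀ j : Fin f, w (.inr j) = 0) : eInner u w = 0 := by
  have hcycle (i : Fin c) : ∑ j : ZMod m, u (.inl (i, j)) * w (.inl (i, j)) = 0 := by
    simp only [apply_inl_eq_of_aqcShift_eq hu i, ← Finset.mul_sum, hw_cycle, mul_zero]
  simp [eInner, Fintype.sum_sum_type, Fintype.sum_prod_type, hcycle, hw_fixed]

theorem aqc_code_iff_fixed_and_even_general {F : Type*} [Field F] (p : ℕ) [CharP F p]
    {c m f : ℕ} [NeZero m] (hm : ¬ p ∣ m)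
    (C : Submodule F ((Fin c × ZMod m) ⊕ Fin f → F))
    (hC : ∀ v, v ∈ C ↔ aqcShift v ∈ C) :
    IsSelfOrthogonalSet (C : Set ((Fin c × ZMod m) ⊕ Fin f → F)) ↔
      (IsSelfOrthogonalSet (aqcFixedCode C) ∧ IsSelfOrthogonalSet (aqcEvenCode C)) := by
  have hm0 : (m : F) ≠ 0 := fun h => hm ((CharP.cast_eq_zero_iff F p m).mp h)
  have hshift : ∀ v ∈ C, aqcShift v ∈ C := fun v => (hC v).mp
  refine ⟨fun h => ⟨h.mono fun _ hv => hv.1, h.mono fun _ hv => hv.1⟩, fun ⟨hF, hE⟩ => ?_⟩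
  refine isSelfOrthogonalSet_of_forall_eq_add hF hE
    (fun _ ha _ hb => eInner_eq_zero_of_aqcShift_eq ha.2 hb.2.1 hb.2.2) fun v hv => ?_
  exact ⟨_, aqcAverage_mem_aqcFixedCode hshift hv, _,
    sub_aqcAverage_mem_aqcEvenCode hm0 hshift hv, (add_sub_cancel _ _).symm⟩

/-- Let `F` be a finite field of characteristic `p` with `p ∤ m`, and let
`C` be a linear code of length `n = cm + f` over `F` with a permutation automorphism `σ` of
type `m-(c,f)`. Then `C` is Euclidean self-orthogonal if and only if both `F_σ(C)` and `E_σ(C)`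
are Euclidean self-orthogonal. -/
theorem aqc_code_iff_fixed_and_even {F : Type*} [Field F] [Fintype F] (p : ℕ) [CharP F p]
    {c m f : ℕ} [NeZero m] (hm : ¬ p ∣ m)
    (C : Submodule F ((Fin c × ZMod m) ⊕ Fin f → F))
    (hC : ∀ v, v ∈ C ↔ aqcShift v ∈ C) :
    IsSelfOrthogonalSet (C : Set ((Fin c × ZMod m) ⊕ Fin f → F)) ↔
      (IsSelfOrthogonalSet (aqcFixedCode C) ∧ IsSelfOrthogonalSet (aqcEvenCode C)) :=
  aqc_code_iff_fixed_and_even_general p hm C hC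
end

section
/- Let F be a finite field and let C be a quasi-cyclic code over F of length sm and index s. If C is self-dual with respect to the Euclidean inner product, then C_π = π(F_σ(C)) equals the dual code C_ψ^⊥ of C_ψ = ψ(C) in F^s. -/
open Finset

/-- The quasi-cyclic shift permutation action on `F^{sm}` (coordinates indexed by
`(i,j) ∈ {1,…,s} × Z_m`): the coordinate of `vσ` at `(i,j)` is `v (i, j+1)`. -/
def qcShift {F : Type*} {s m : ℕ} (v : Fin s × ZMod m → F) : Fin s × ZMod m → F :=
  fun ij => v (ij.1, ij.2 + 1)

/-- The projection `π : F^{sm} → F^s`; on a shift-fixed vector it returns the common value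
on each block. -/
def qcPi {F : Type*} {s m : ℕ} (v : Fin s × ZMod m → F) : Fin s → F :=
  fun i => v (i, 0)

/-- The map `ψ : F^{sm} → F^s`, `ψ(v) i = ∑_{j ∈ Z_m} v (i,j)`. -/
def qcPsi {F : Type*} [Field F] {s m : ℕ} [NeZero m] (v : Fin s × ZMod m → F) : Fin s → F :=
  fun i => ∑ j : ZMod m, v (i, j)

/-! A vector fixed by the shift is constant on each block, so its inner product with any `c`
equals `π(v) · ψ(c)`; conversely every `u ∈ F^s` lifts to the block-constant vector whose inner
product with `c` is `u · ψ(c)`. Self-duality of `C` turns both identities into the two inclusions. -/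

theorem apply_eq_qcPi_of_qcShift_eq_self {F : Type*} {s m : ℕ} {v : Fin s × ZMod m → F}
    (hv : qcShift v = v) (i : Fin s) (j : ZMod m) : v (i, j) = qcPi v i := by
  have hstep (k : ℤ) : v (i, ((k + 1 : ℤ) : ZMod m)) = v (i, (k : ZMod m)) := by
    simpa [qcShift] using congrFun hv (i, (k : ZMod m))
  obtain ⟨k, rfl⟩ := ZMod.intCast_surjective j
  induction k using Int.induction_on with
  | zero => simp [qcPi]
  | succ k ih => rw [hstep, ih]
  | pred k ih => rw [← ih, ← hstep, sub_add_cancel]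

theorem eInner_blockConst_eq_eInner_qcPsi {F : Type*} [Field F] {s m : ℕ} [NeZero m]
    (u : Fin s → F) (c : Fin s × ZMod m → F) :
    eInner (fun ij : Fin s × ZMod m => u ij.1) c = eInner u (qcPsi c) := by
  simp only [eInner, qcPsi, Fintype.sum_prod_type, mul_sum]

theorem pi_image_eq_dual_psi_image_general {F : Type*} [Field F] {s m : ℕ} [NeZero m]
    (C : Submodule F (Fin s × ZMod m → F))
    (hsd : IsSelfDualSet (C : Set (Fin s × ZMod m → F))) :
    qcPi '' {v | v ∈ C ∧ qcShift v = v} = dualSet (qcPsi '' (C : Set (Fin s × ZMod m → F))) := by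
  ext u
  constructor
  · rintro ⟨v, ⟨hvC, hvfix⟩, rfl⟩ _ ⟨c, hcC, rfl⟩
    have hv_block : (fun ij : Fin s × ZMod m => qcPi v ij.1) = v :=
      funext fun ij => (apply_eq_qcPi_of_qcShift_eq_self hvfix ij.1 ij.2).symm
    rw [← eInner_blockConst_eq_eInner_qcPsi, hv_block]
    exact (hsd ▸ hvC : v ∈ dualSet (C : Set _)) c hcC
  · intro hu
    refine ⟨fun ij => u ij.1, ⟨?_, rfl⟩, rfl⟩
    rw [← SetLike.mem_coe, hsd]
    intro c hcC
    rw [eInner_blockConst_eq_eInner_qcPsi]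
    exact hu _ ⟨c, hcC, rfl⟩

/-- If a quasi-cyclic code `C` of length `sm` and index `s` over a finite
field is self-dual with respect to the Euclidean inner product, then
`C_π = π(F_σ(C))` equals the dual code of `C_ψ = ψ(C)` in `F^s`. -/
theorem pi_image_eq_dual_psi_image {F : Type*} [Field F] [Fintype F] {s m : ℕ} [NeZero m]
    (C : Submodule F (Fin s × ZMod m → F)) (hC : ∀ v, v ∈ C ↔ qcShift v ∈ C)
    (hsd : IsSelfDualSet (C : Set (Fin s × ZMod m → F))) :
    qcPi '' {v | v ∈ C ∧ qcShift v = v} = dualSet (qcPsi '' (C : Set (Fin s × ZMod m → F))) :=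
  pi_image_eq_dual_psi_image_general C hsd
end

section
/- Let F be a finite field of characteristic p with p not dividing m, and let C be a quasi-cyclic code over F of length sm and index s. Then the codes C_ψ = ψ(C) and C_π = π(F_σ(C)) coincide: ψ(C) = π(F_σ(C)) as subspaces of F^s. -/
open Finset

/-!
Summing the `m` cyclic translates of a codeword `v` gives a codeword that is constant on each
block, with block value `ψ(v)`; so `ψ(C) ⊆ π(F_σ(C))`. Conversely, on a `σ`-fixed vector
`ψ = m • π`, and `m` is invertible in `F` because `p ∤ m`, so `π(v) = ψ(m⁻¹ • v)`.
-/

section QuasiCyclic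

variable {F : Type*} {s m : ℕ}

def qcTranslate (k : ZMod m) (v : Fin s × ZMod m → F) : Fin s × ZMod m → F :=
  fun ij => v (ij.1, ij.2 + k)

lemma qcShift_iterate (v : Fin s × ZMod m → F) (n : ℕ) :
    qcShift^[n] v = qcTranslate (n : ZMod m) v := by
  induction n with
  | zero => funext ij; simp [qcTranslate]
  | succ n ih =>
    rw [Function.iterate_succ_apply', ih]
    funext ij
    simp only [qcShift, qcTranslate, Nat.cast_succ]
    congr 2
    ring

variable [NeZero m]

lemma qcTranslate_mem_of_mapsTo {S : Set (Fin s × ZMod m → F)} (hS : Set.MapsTo qcShift S S)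
    (k : ZMod m) {v : Fin s × ZMod m → F} (hv : v ∈ S) : qcTranslate k v ∈ S := by
  rw [← ZMod.natCast_zmod_val k, ← qcShift_iterate]
  exact hS.iterate _ hv

lemma apply_eq_qcPi_of_qcShift_eq {v : Fin s × ZMod m → F} (hv : qcShift v = v)
    (i : Fin s) (j : ZMod m) : v (i, j) = qcPi v i := by
  have hj : qcTranslate j v = v := by
    rw [← ZMod.natCast_zmod_val j, ← qcShift_iterate, Function.iterate_fixed hv]
  simpa [qcTranslate, qcPi] using congrFun hj (i, 0)

variable [Field F]

lemma qcPsi_smul (c : F) (v : Fin s × ZMod m → F) : qcPsi (c • v) = c • qcPsi v := by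
  funext i
  simp [qcPsi, Finset.mul_sum]

lemma qcPsi_eq_smul_qcPi_of_qcShift_eq {v : Fin s × ZMod m → F} (hv : qcShift v = v) :
    qcPsi v = (m : F) • qcPi v := by
  funext i
  simp [qcPsi, apply_eq_qcPi_of_qcShift_eq hv i, ZMod.card]

lemma qcPsi_comp_fst_eq_sum_qcTranslate (v : Fin s × ZMod m → F) :
    (fun ij => qcPsi v ij.1) = ∑ k : ZMod m, qcTranslate k v := by
  funext ij
  rw [Finset.sum_apply]
  exact (Equiv.sum_comp (Equiv.addLeft ij.2) fun j => v (ij.1, j)).symm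

lemma qcPsi_comp_fst_mem {C : Submodule F (Fin s × ZMod m → F)}
    (hC : Set.MapsTo qcShift (C : Set (Fin s × ZMod m → F)) C) {v : Fin s × ZMod m → F}
    (hv : v ∈ C) : (fun ij => qcPsi v ij.1) ∈ C := by
  rw [qcPsi_comp_fst_eq_sum_qcTranslate]
  exact C.sum_mem fun k _ => qcTranslate_mem_of_mapsTo hC k hv

end QuasiCyclic

theorem psi_image_eq_pi_image_general {F : Type*} [Field F] (p : ℕ) [CharP F p]
    {s m : ℕ} [NeZero m] (hm : ¬ p ∣ m)
    (C : Submodule F (Fin s × ZMod m → F)) (hC : ∀ v, v ∈ C ↔ qcShift v ∈ C) :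
    qcPsi '' (C : Set (Fin s × ZMod m → F)) = qcPi '' {v | v ∈ C ∧ qcShift v = v} := by
  have hmF : (m : F) ≠ 0 := by rwa [Ne, CharP.cast_eq_zero_iff F p]
  refine Set.Subset.antisymm ?_ ?_
  · rintro _ ⟨v, hv, rfl⟩
    exact ⟨fun ij => qcPsi v ij.1, ⟨qcPsi_comp_fst_mem (fun w => (hC w).mp) hv, rfl⟩, rfl⟩
  · rintro _ ⟨v, ⟨hv, hfix⟩, rfl⟩
    refine ⟨(m : F)⁻¹ • v, C.smul_mem _ hv, ?_⟩
    rw [qcPsi_smul, qcPsi_eq_smul_qcPi_of_qcShift_eq hfix, smul_smul, inv_mul_cancel₀ hmF,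
      one_smul]

/-- If `F` has characteristic `p` with `p ∤ m` and `C` is a quasi-cyclic
code of length `sm` and index `s` over `F`, then `C_ψ = ψ(C)` and `C_π = π(F_σ(C))`
coincide as subsets of `F^s`. -/
theorem psi_image_eq_pi_image {F : Type*} [Field F] [Fintype F] (p : ℕ) [CharP F p]
    {s m : ℕ} [NeZero m] (hm : ¬ p ∣ m)
    (C : Submodule F (Fin s × ZMod m → F)) (hC : ∀ v, v ∈ C ↔ qcShift v ∈ C) :
    qcPsi '' (C : Set (Fin s × ZMod m → F)) = qcPi '' {v | v ∈ C ∧ qcShift v = v} :=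
  psi_image_eq_pi_image_general p hm C hC
end
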